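/- For any p > 1, ∫_0^1 ∫_{0}^{(1-y^p)^{1/p}} xy (1-x^p-y^p)^{-1/p} dx dy = Γ(1-1/p)Γ(1+1/p) · Γ(2/p)² / (3·Γ(1/p)·Γ(3/p)). -/

import Mathlib

open MeasureTheory Set Real

/-! For fixed `y`, the substitution `x = (1 - y^p)^{1/p} t` turns the inner integral into
`y (1 - y^p)^{1/p}` times the fixed integral `∫₀¹ t (1 - t^p)^{-1/p} dt`, and the substitution
`u = t^p` turns this integral, and then the outer one, into Beta integrals:
`B(2/p, 1 - 1/p) / p` and `B(2/p, 1 + 1/p) / p`. In their product `Γ(1 + 1/p)` cancels, and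
`Γ(1 + 3/p) = (3/p) Γ(3/p)`, `Γ(1 + 1/p) = (1/p) Γ(1/p)` give the closed form. -/

theorem intervalIntegral_rpow_mul_one_sub_rpow_eq_beta {a b : ℝ} (ha : 0 < a) (hb : 0 < b) :
    ∫ x in (0:ℝ)..1, x ^ (a - 1) * (1 - x) ^ (b - 1) = ProbabilityTheory.beta a b := by
  have hcomplex : Complex.betaIntegral a b =
      ((∫ x in (0:ℝ)..1, x ^ (a - 1) * (1 - x) ^ (b - 1) : ℝ) : ℂ) := by
    rw [Complex.betaIntegral, ← intervalIntegral.integral_ofReal]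
    refine intervalIntegral.integral_congr fun x hx => ?_
    rw [uIcc_of_le zero_le_one] at hx
    push_cast
    rw [Complex.ofReal_cpow hx.1, Complex.ofReal_cpow (sub_nonneg.2 hx.2)]
    push_cast
    ring_nf
  rw [ProbabilityTheory.beta_eq_betaIntegralReal a b ha hb, hcomplex, Complex.ofReal_re]

theorem image_rpow_Ioo_zero_one {p : ℝ} (hp : 0 < p) :
    (fun t : ℝ => t ^ p) '' Ioo 0 1 = Ioo 0 1 := by
  refine Subset.antisymm ?_ fun u hu => ?_
  · rintro _ ⟨t, ht, rfl⟩
    exact ⟨rpow_pos_of_pos ht.1 p, rpow_lt_one ht.1.le ht.2 hp⟩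
  · exact ⟨u ^ p⁻¹, ⟨rpow_pos_of_pos hu.1 _, rpow_lt_one hu.1.le hu.2 (inv_pos.2 hp)⟩,
      rpow_inv_rpow hu.1.le hp.ne'⟩

theorem intervalIntegral_rpow_mul_comp_rpow {p : ℝ} (hp : 0 < p) (a : ℝ) (g : ℝ → ℝ) :
    ∫ t in (0:ℝ)..1, t ^ (a - 1) * g (t ^ p) =
      p⁻¹ * ∫ u in (0:ℝ)..1, u ^ (a / p - 1) * g u := by
  simp only [intervalIntegral.integral_of_le zero_le_one, integral_Ioc_eq_integral_Ioo]
  rw [eq_inv_mul_iff_mul_eq₀ hp.ne', ← integral_const_mul]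
  conv_rhs => rw [← image_rpow_Ioo_zero_one hp]
  rw [integral_image_eq_integral_abs_deriv_smul measurableSet_Ioo
    (fun t ht => (hasDerivAt_rpow_const (Or.inl ht.1.ne')).hasDerivWithinAt)
    ((rpow_left_injOn hp.ne').mono fun t ht => ht.1.le)]
  refine setIntegral_congr_fun measurableSet_Ioo fun t ⟨ht, _⟩ => ?_
  have hpow : t ^ (p - 1) * (t ^ p) ^ (a / p - 1) = t ^ (a - 1) := by
    rw [← rpow_mul ht.le, ← rpow_add ht]
    congr 1
    field_simp
    ring
  rw [smul_eq_mul, abs_of_pos (by positivity), ← hpow]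
  ring

theorem intervalIntegral_rpow_mul_sub_rpow_rpow {p c : ℝ} (hp : 0 < p) (hc : 0 < c) (a b : ℝ) :
    ∫ x in (0:ℝ)..c ^ (1 / p), x ^ (a - 1) * (c - x ^ p) ^ (b - 1) =
      c ^ (a / p + b - 1) * ∫ t in (0:ℝ)..1, t ^ (a - 1) * (1 - t ^ p) ^ (b - 1) := by
  set k := c ^ (1 / p)
  have hk : 0 < k := rpow_pos_of_pos hc _
  have hkp : k ^ p = c := by rw [← rpow_mul hc.le, one_div_mul_cancel hp.ne', rpow_one]
  have hs := intervalIntegral.smul_integral_comp_mul_left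
    (fun x => x ^ (a - 1) * (c - x ^ p) ^ (b - 1)) k (a := 0) (b := 1)
  rw [mul_zero, mul_one] at hs
  rw [← hs, smul_eq_mul, ← intervalIntegral.integral_const_mul,
    ← intervalIntegral.integral_const_mul]
  refine intervalIntegral.integral_congr fun t ht => ?_
  rw [uIcc_of_le zero_le_one] at ht
  have h1 : 0 ≤ 1 - t ^ p := sub_nonneg.2 (rpow_le_one ht.1 ht.2 hp.le)
  have hexp : k * k ^ (a - 1) * c ^ (b - 1) = c ^ (a / p + b - 1) := by
    rw [← rpow_mul hc.le, ← rpow_add hc, ← rpow_add hc]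
    congr 1
    field_simp
    ring
  rw [mul_rpow hk.le ht.1, mul_rpow hk.le ht.1, hkp, ← mul_one_sub, mul_rpow hc.le h1, ← hexp]
  ring

theorem intervalIntegral_rpow_mul_one_sub_rpow_rpow_eq_beta {p a b : ℝ} (hp : 0 < p) (ha : 0 < a)
    (hb : 0 < b) :
    ∫ t in (0:ℝ)..1, t ^ (a - 1) * (1 - t ^ p) ^ (b - 1) =
      ProbabilityTheory.beta (a / p) b / p := by
  rw [intervalIntegral_rpow_mul_comp_rpow hp a fun u => (1 - u) ^ (b - 1),
    intervalIntegral_rpow_mul_one_sub_rpow_eq_beta (div_pos ha hp) hb, inv_mul_eq_div]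

/-- For p > 1,
∫_0^1 ∫_0^{(1-y^p)^{1/p}} x y (1-x^p-y^p)^{-1/p} dx dy
  = Γ(1-1/p)Γ(1+1/p)·Γ(2/p)²/(3Γ(1/p)Γ(3/p)). -/
theorem double_integral_xy (p : ℝ) (hp : 1 < p) :
    (∫ y in (0:ℝ)..1, ∫ x in (0:ℝ)..((1 - y ^ p) ^ (1/p)),
        x * y * (1 - x ^ p - y ^ p) ^ (-(1/p))) =
      Real.Gamma (1 - 1/p) * Real.Gamma (1 + 1/p) * Real.Gamma (2/p) ^ 2 /
        (3 * Real.Gamma (1/p) * Real.Gamma (3/p)) := by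
  have hp0 : 0 < p := one_pos.trans hp
  have hq : 0 < 1 - 1 / p := by rw [sub_pos, div_lt_one hp0]; exact hp
  set K := ProbabilityTheory.beta (2 / p) (1 - 1 / p) / p
  have hinner : ∀ y ∈ Ioo (0:ℝ) 1,
      (∫ x in (0:ℝ)..(1 - y ^ p) ^ (1 / p), x * y * (1 - x ^ p - y ^ p) ^ (-(1 / p))) =
        K * (y ^ (2 - 1 : ℝ) * (1 - y ^ p) ^ (1 + 1 / p - 1)) := by
    rintro y ⟨hy0, hy1⟩
    have hc : 0 < 1 - y ^ p := sub_pos.2 (rpow_lt_one hy0.le hy1 hp0)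
    calc _ = y * ∫ x in (0:ℝ)..(1 - y ^ p) ^ (1 / p),
            x ^ (2 - 1 : ℝ) * ((1 - y ^ p) - x ^ p) ^ (1 - 1 / p - 1) := by
          rw [← intervalIntegral.integral_const_mul]
          refine intervalIntegral.integral_congr fun x _ => ?_
          rw [show (2 - 1 : ℝ) = 1 by norm_num, rpow_one, sub_sub_cancel_left, sub_right_comm]
          ring
      _ = _ := by
          rw [intervalIntegral_rpow_mul_sub_rpow_rpow hp0 hc,
            intervalIntegral_rpow_mul_one_sub_rpow_rpow_eq_beta hp0 two_pos hq,
            show 2 / p + (1 - 1 / p) - 1 = 1 + 1 / p - 1 by ring,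
            show (2 - 1 : ℝ) = 1 by norm_num, rpow_one]
          ring
  rw [intervalIntegral.integral_congr_Ioo_of_le zero_le_one hinner,
    intervalIntegral.integral_const_mul,
    intervalIntegral_rpow_mul_one_sub_rpow_rpow_eq_beta hp0 two_pos (by positivity)]
  simp only [K, ProbabilityTheory.beta]
  rw [show 2 / p + (1 - 1 / p) = 1 + 1 / p by ring, show 2 / p + (1 + 1 / p) = 3 / p + 1 by ring,
    Gamma_add_one (by positivity), add_comm 1 (1 / p), Gamma_add_one (by positivity)]
  field_simp
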